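/- arXiv:2604.09102 — 3 statements merged into one kernel-verified Lean document; each statement's English description precedes it below -/
import Mathlib

section
/- In the discrete-time uniprocessor preemptive fixed-priority scheduling model, let C and C' be two execution-requirement assignments with C'(i,k) ≤ C(i,k) for every task i and every job index k (releases, periods, phases and priorities being identical). Then for every job J_i^k, the start time under C' is at most the start time under C and the finish time under C' is at most the finish time under C: s_{C'}(i,k) ≤ s_C(i,k) and f_{C'}(i,k) ≤ f_C(i,k) (as elements of ℕ∞). In particular, the schedule obtained when every job executes with its task's worst-case execution time gives upper bounds on the start and finish times of all jobs over all execution-time assignments bounded above by the worst-case execution times. -/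
open scoped BigOperators

/-- Release time of the `k`-th job of task `i`: `r(i,k) = O i + k · T i`. -/
def release {ι : Type} (O T : ι → ℕ) (i : ι) (k : ℕ) : ℕ := O i + k * T i

open Classical in
/-- Service received by job `j` during `[rel, t)` under schedule `σ`: the number of
instants in `[rel, t)` at which `σ` serves `j`. -/
noncomputable def service {ι : Type} (σ : ℕ → Option (ι × ℕ)) (rel : ℕ)
    (j : ι × ℕ) (t : ℕ) : ℕ :=
  ((Finset.Ico rel t).filter (fun u => σ u = some j)).card

/-- Job `j = (i,k)` is pending at time `t`: it is released at or before `t` and has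
received strictly fewer units of service than its requirement during `[r(i,k), t)`. -/
def Pending {ι : Type} (O T : ι → ℕ) (C : ι → ℕ → ℕ) (σ : ℕ → Option (ι × ℕ))
    (j : ι × ℕ) (t : ℕ) : Prop :=
  release O T j.1 j.2 ≤ t ∧ service σ (release O T j.1 j.2) j t < C j.1 j.2

/-- `σ` is the preemptive fixed-priority schedule for requirements `C`: at each instant `t`
it serves nothing if no job is pending, and otherwise serves a pending job of the task of
highest priority among tasks with a pending job, choosing among pending jobs of that task
one with earliest release time. -/
def IsFPSchedule {ι : Type} (π O T : ι → ℕ) (C : ι → ℕ → ℕ)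
    (σ : ℕ → Option (ι × ℕ)) : Prop :=
  ∀ t : ℕ,
    ((¬ ∃ j, Pending O T C σ j t) → σ t = none) ∧
    ((∃ j, Pending O T C σ j t) →
      ∃ j, σ t = some j ∧ Pending O T C σ j t ∧
        (∀ j', Pending O T C σ j' t → π j'.1 ≤ π j.1) ∧
        (∀ k' : ℕ, Pending O T C σ (j.1, k') t →
          release O T j.1 j.2 ≤ release O T j.1 k'))

/-- Start time of job `j` under schedule `σ`: the first instant at which `j` is served
(`⊤` if `j` is never served). -/
noncomputable def startTime {ι : Type} (σ : ℕ → Option (ι × ℕ)) (j : ι × ℕ) : ℕ∞ :=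
  sInf {t : ℕ∞ | ∃ u : ℕ, t = (u : ℕ∞) ∧ σ u = some j}

/-- Finish time of job `j = (i,k)` under schedule `σ` with requirements `C`: the least `t`
such that `j` has received `C i k` units of service during `[r(i,k), t)` (`⊤` if no such
instant exists). -/
noncomputable def finishTime {ι : Type} (O T : ι → ℕ) (C : ι → ℕ → ℕ)
    (σ : ℕ → Option (ι × ℕ)) (j : ι × ℕ) : ℕ∞ :=
  sInf {t : ℕ∞ | ∃ u : ℕ, t = (u : ℕ∞) ∧
    service σ (release O T j.1 j.2) j u = C j.1 j.2}

section Aux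
variable {ι : Type}

lemma service_zero (σ : ℕ → Option (ι × ℕ)) (rel : ℕ) (j : ι × ℕ) {t : ℕ} (h : t ≤ rel) :
    service σ rel j t = 0 := by
  unfold service
  rw [Finset.Ico_eq_empty (by omega), Finset.filter_empty, Finset.card_empty]

open Classical in
lemma service_succ (σ : ℕ → Option (ι × ℕ)) (rel : ℕ) (j : ι × ℕ) (t : ℕ) :
    service σ rel j (t+1) =
      service σ rel j t + (if rel ≤ t ∧ σ t = some j then 1 else 0) := by
  by_cases h : rel ≤ t
  · unfold service
    rw [Finset.card_filter, Finset.card_filter, Finset.sum_Ico_succ_top (by omega)]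
    simp [h]
  · rw [service_zero σ rel j (by omega), service_zero σ rel j (by omega)]
    simp [h]

open Classical in
lemma service_mono (σ : ℕ → Option (ι × ℕ)) (rel : ℕ) (j : ι × ℕ) {t t' : ℕ} (h : t ≤ t') :
    service σ rel j t ≤ service σ rel j t' := by
  unfold service
  exact Finset.card_le_card (Finset.filter_subset_filter _ (Finset.Ico_subset_Ico le_rfl h))

lemma served_pending {π O T : ι → ℕ} {C : ι → ℕ → ℕ} {σ : ℕ → Option (ι × ℕ)}
    (hσ : IsFPSchedule π O T C σ) {t : ℕ} {j : ι × ℕ} (h : σ t = some j) :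
    Pending O T C σ j t := by
  by_cases hp : ∃ j', Pending O T C σ j' t
  · obtain ⟨j', hj', hpend, -⟩ := (hσ t).2 hp
    rw [h] at hj'
    injection hj' with hj'
    exact hj' ▸ hpend
  · rw [(hσ t).1 hp] at h; exact absurd h (by simp)

lemma service_le_req {π O T : ι → ℕ} {C : ι → ℕ → ℕ} {σ : ℕ → Option (ι × ℕ)}
    (hσ : IsFPSchedule π O T C σ) (j : ι × ℕ) : ∀ t,
    service σ (release O T j.1 j.2) j t ≤ C j.1 j.2 := by
  intro t
  induction t with
  | zero => rw [service_zero σ _ j (Nat.zero_le _)]; exact Nat.zero_le _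
  | succ t ih =>
    rw [service_succ]
    split_ifs with h
    · exact (served_pending hσ h.2).2
    · simpa using ih

lemma release_le_release_iff {O T : ι → ℕ} {i : ι} (hT : 1 ≤ T i) {k k' : ℕ} :
    release O T i k ≤ release O T i k' ↔ k ≤ k' := by
  unfold release
  constructor
  · intro h
    by_contra h'
    push_neg at h'
    nlinarith
  · intro h
    nlinarith

end Aux

section Rem
variable {ι : Type} [Fintype ι]

open Classical in
/-- Finite set of jobs in `B` released at or before `t` (indices bounded via `T ≥ 1`). -/
noncomputable def jobsB (O T : ι → ℕ) (B : ι × ℕ → Prop) (s t : ℕ) : Finset (ι × ℕ) :=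
  (Finset.univ ×ˢ Finset.range (s+1)).filter (fun j => release O T j.1 j.2 ≤ t ∧ B j)

lemma mem_jobsB {O T : ι → ℕ} (hT : ∀ i, 1 ≤ T i) {B : ι × ℕ → Prop} {s t : ℕ}
    (hts : t ≤ s) {j : ι × ℕ} :
    j ∈ jobsB O T B s t ↔ release O T j.1 j.2 ≤ t ∧ B j := by
  classical
  unfold jobsB
  simp only [Finset.mem_filter, Finset.mem_product, Finset.mem_univ, true_and,
    Finset.mem_range]
  constructor
  · tauto
  · intro h
    refine ⟨?_, h⟩
    have h1 : j.2 ≤ j.2 * T j.1 := Nat.le_mul_of_pos_right _ (hT j.1)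
    have h2 : j.2 * T j.1 ≤ release O T j.1 j.2 := Nat.le_add_left _ _
    omega

open Classical in
/-- Remaining work at time `t` of jobs in `B` released at or before `t`. -/
noncomputable def rem (O T : ι → ℕ) (C : ι → ℕ → ℕ) (σ : ℕ → Option (ι × ℕ))
    (B : ι × ℕ → Prop) (t : ℕ) : ℕ :=
  ∑ j ∈ jobsB O T B t t, (C j.1 j.2 - service σ (release O T j.1 j.2) j t)

open Classical in
lemma rem_pos_pending {O T : ι → ℕ} (hT : ∀ i, 1 ≤ T i) {C : ι → ℕ → ℕ}
    {σ : ℕ → Option (ι × ℕ)} {B : ι × ℕ → Prop} {t : ℕ}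
    (h : 0 < rem O T C σ B t) : ∃ j, B j ∧ Pending O T C σ j t := by
  unfold rem at h
  obtain ⟨j, hj, hpos⟩ : ∃ j ∈ jobsB O T B t t,
      0 < C j.1 j.2 - service σ (release O T j.1 j.2) j t := by
    by_contra hc
    push_neg at hc
    have : rem O T C σ B t = 0 := Finset.sum_eq_zero (fun j hj => by
      have := hc j hj; omega)
    unfold rem at this; omega
  rw [mem_jobsB hT le_rfl] at hj
  exact ⟨j, hj.2, hj.1, by omega⟩

open Classical in
lemma rem_eq_zero_of_served {O T : ι → ℕ} (hT : ∀ i, 1 ≤ T i) {C : ι → ℕ → ℕ}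
    {σ : ℕ → Option (ι × ℕ)} {B : ι × ℕ → Prop} {t : ℕ}
    (h : ∀ j, B j → release O T j.1 j.2 ≤ t → C j.1 j.2 ≤ service σ (release O T j.1 j.2) j t) :
    rem O T C σ B t = 0 := by
  unfold rem
  refine Finset.sum_eq_zero (fun j hj => ?_)
  rw [mem_jobsB hT le_rfl] at hj
  have := h j hj.2 hj.1
  omega

open Classical in
lemma rem_pos_of_pending {O T : ι → ℕ} (hT : ∀ i, 1 ≤ T i) {C : ι → ℕ → ℕ}
    {σ : ℕ → Option (ι × ℕ)} {B : ι × ℕ → Prop} {t : ℕ} {j : ι × ℕ}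
    (hB : B j) (hp : Pending O T C σ j t) : 0 < rem O T C σ B t := by
  have hmem : j ∈ jobsB O T B t t := (mem_jobsB hT le_rfl).2 ⟨hp.1, hB⟩
  have := Finset.single_le_sum
    (f := fun j => C j.1 j.2 - service σ (release O T j.1 j.2) j t)
    (fun _ _ => Nat.zero_le _) hmem
  have h3 : C j.1 j.2 - service σ (release O T j.1 j.2) j t ≤ rem O T C σ B t := this
  have h2 := hp.2
  omega

open Classical in
lemma rem_succ {π O T : ι → ℕ} (hT : ∀ i, 1 ≤ T i) {C : ι → ℕ → ℕ}
    {σ : ℕ → Option (ι × ℕ)} (hσ : IsFPSchedule π O T C σ) (B : ι × ℕ → Prop) (t : ℕ) :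
    rem O T C σ B (t+1) =
      (rem O T C σ B t - ∑ j ∈ jobsB O T B t t, (if σ t = some j then 1 else 0))
        + ∑ j ∈ jobsB O T B (t+1) (t+1) \ jobsB O T B (t+1) t, C j.1 j.2 := by
  have hsub : jobsB O T B (t+1) t ⊆ jobsB O T B (t+1) (t+1) := by
    intro j hj
    rw [mem_jobsB hT (by omega)] at hj ⊢
    exact ⟨by omega, hj.2⟩
  unfold rem
  rw [← Finset.sum_sdiff hsub]
  have hnew : ∀ j ∈ jobsB O T B (t+1) (t+1) \ jobsB O T B (t+1) t,
      C j.1 j.2 - service σ (release O T j.1 j.2) j (t+1) = C j.1 j.2 := by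
    intro j hj
    rw [Finset.mem_sdiff, mem_jobsB hT le_rfl, mem_jobsB hT (by omega)] at hj
    have hrel : release O T j.1 j.2 = t+1 := by
      rcases hj with ⟨⟨h1, hB⟩, h2⟩
      by_contra h
      exact h2 ⟨by omega, hB⟩
    rw [hrel, service_zero σ _ j le_rfl]
    omega
  rw [Finset.sum_congr rfl hnew]
  have hsets : jobsB O T B (t+1) t = jobsB O T B t t := by
    ext j
    rw [mem_jobsB hT (by omega), mem_jobsB hT le_rfl]
  rw [hsets]
  have hold : ∀ j ∈ jobsB O T B t t,
      C j.1 j.2 - service σ (release O T j.1 j.2) j (t+1)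
        = (C j.1 j.2 - service σ (release O T j.1 j.2) j t)
          - (if σ t = some j then 1 else 0) := by
    intro j hj
    rw [mem_jobsB hT le_rfl] at hj
    rw [service_succ]
    have : (if release O T j.1 j.2 ≤ t ∧ σ t = some j then 1 else 0)
        = (if σ t = some j then 1 else 0) := by
      simp [hj.1]
    rw [this]
    split_ifs <;> omega
  rw [Finset.sum_congr rfl hold, Finset.sum_tsub_distrib _ ?hpt]
  · rw [add_comm]
  case hpt =>
    intro j hj
    split_ifs with h
    · have hp := served_pending hσ h
      have := hp.2
      omega
    · exact Nat.zero_le _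

open Classical in
lemma ind_sum_eq_one {O T : ι → ℕ} (hT : ∀ i, 1 ≤ T i) {σ : ℕ → Option (ι × ℕ)}
    {B : ι × ℕ → Prop} {t : ℕ} {j₀ : ι × ℕ} (hs : σ t = some j₀)
    (hmem : j₀ ∈ jobsB O T B t t) :
    ∑ j ∈ jobsB O T B t t, (if σ t = some j then 1 else 0) = 1 := by
  have : ∀ j ∈ jobsB O T B t t,
      (if σ t = some j then (1:ℕ) else 0) = (if j₀ = j then 1 else 0) := by
    intro j _
    rw [hs]
    simp [Option.some.injEq]
  rw [Finset.sum_congr rfl this, Finset.sum_ite_eq]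
  simp [hmem]

end Rem

section Mono
variable {ι : Type} [Fintype ι]

open Classical in
lemma rem_mono {π O T : ι → ℕ} (hT : ∀ i, 1 ≤ T i)
    {C C' : ι → ℕ → ℕ} (hle : ∀ i k, C' i k ≤ C i k)
    {σ σ' : ℕ → Option (ι × ℕ)} (hσ : IsFPSchedule π O T C σ)
    (hσ' : IsFPSchedule π O T C' σ') (B : ι × ℕ → Prop) (t₀ : ℕ)
    (hcl : ∀ t < t₀, ∀ j, B j → Pending O T C σ j t → ∃ j', σ t = some j' ∧ B j')
    (hcl' : ∀ t < t₀, ∀ j, B j → Pending O T C' σ' j t → ∃ j', σ' t = some j' ∧ B j') :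
    ∀ t ≤ t₀, rem O T C' σ' B t ≤ rem O T C σ B t := by
  intro t
  induction t with
  | zero =>
    intro _
    unfold rem
    refine Finset.sum_le_sum (fun j hj => ?_)
    have h1 := service_zero σ (release O T j.1 j.2) j (Nat.zero_le _)
    have h2 := hle j.1 j.2
    omega
  | succ t ih =>
    intro ht
    have htlt : t < t₀ := by omega
    have IH := ih (by omega)
    rw [rem_succ hT hσ B t, rem_succ hT hσ' B t]
    have ha : ∑ j ∈ jobsB O T B (t+1) (t+1) \ jobsB O T B (t+1) t, C' j.1 j.2
        ≤ ∑ j ∈ jobsB O T B (t+1) (t+1) \ jobsB O T B (t+1) t, C j.1 j.2 :=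
      Finset.sum_le_sum (fun j _ => hle j.1 j.2)
    by_cases h0 : 0 < rem O T C' σ' B t
    · obtain ⟨j, hBj, hpend⟩ := rem_pos_pending hT h0
      obtain ⟨j', hs', hBj'⟩ := hcl' t htlt j hBj hpend
      have hd' : ∑ j ∈ jobsB O T B t t, (if σ' t = some j then 1 else 0) = 1 :=
        ind_sum_eq_one hT hs'
          ((mem_jobsB hT le_rfl).2 ⟨(served_pending hσ' hs').1, hBj'⟩)
      have h0C : 0 < rem O T C σ B t := lt_of_lt_of_le h0 IH
      obtain ⟨j2, hBj2, hpend2⟩ := rem_pos_pending hT h0C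
      obtain ⟨j2', hs2', hBj2'⟩ := hcl t htlt j2 hBj2 hpend2
      have hd : ∑ j ∈ jobsB O T B t t, (if σ t = some j then 1 else 0) = 1 :=
        ind_sum_eq_one hT hs2'
          ((mem_jobsB hT le_rfl).2 ⟨(served_pending hσ hs2').1, hBj2'⟩)
      rw [hd, hd']
      exact add_le_add (Nat.sub_le_sub_right IH 1) ha
    · push_neg at h0
      have h0' : rem O T C' σ' B t
          - ∑ j ∈ jobsB O T B t t, (if σ' t = some j then 1 else 0) = 0 := by omega
      rw [h0']
      rw [zero_add]
      exact le_trans ha (Nat.le_add_left _ _)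

end Mono

section Core
variable {ι : Type} [Fintype ι]

lemma sched_pick {π O T : ι → ℕ} (hπ : Function.Injective π) (hT : ∀ i, 1 ≤ T i)
    {C : ι → ℕ → ℕ} {σ : ℕ → Option (ι × ℕ)} (hσ : IsFPSchedule π O T C σ)
    {i : ι} {t : ℕ} {j : ι × ℕ}
    (hpend : Pending O T C σ j t) (hj : π i ≤ π j.1) :
    ∃ j', σ t = some j' ∧ Pending O T C σ j' t ∧ π j.1 ≤ π j'.1 ∧
      (π i < π j'.1 ∨ (j'.1 = i ∧ (j.1 = i → j'.2 ≤ j.2))) := by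
  obtain ⟨j', hs, hp', hmax, hrel⟩ := (hσ t).2 ⟨j, hpend⟩
  have h1 : π j.1 ≤ π j'.1 := hmax j hpend
  refine ⟨j', hs, hp', h1, ?_⟩
  rcases lt_or_eq_of_le (le_trans hj h1) with h | h
  · exact Or.inl h
  · have ht' : j'.1 = i := hπ h.symm
    refine Or.inr ⟨ht', fun hji => ?_⟩
    have hpj : Pending O T C σ (j'.1, j.2) t := by
      rw [ht', ← hji, Prod.mk.eta]; exact hpend
    have h2 := hrel j.2 hpj
    rw [ht'] at h2
    exact (release_le_release_iff (hT i)).1 h2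

lemma start_core {π O T : ι → ℕ} (hπ : Function.Injective π) (hT : ∀ i, 1 ≤ T i)
    {C C' : ι → ℕ → ℕ} (hC' : ∀ i k, 1 ≤ C' i k) (hle : ∀ i k, C' i k ≤ C i k)
    {σ σ' : ℕ → Option (ι × ℕ)} (hσ : IsFPSchedule π O T C σ)
    (hσ' : IsFPSchedule π O T C' σ') (i : ι) (k : ℕ) {u : ℕ}
    (hu : σ u = some (i,k)) (hmin : ∀ v < u, σ v ≠ some (i,k)) :
    ∃ u' ≤ u, σ' u' = some (i,k) := by
  by_contra hcon
  push_neg at hcon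
  set B : ι × ℕ → Prop := fun j => j ≠ (i,k) ∧ release O T j.1 j.2 ≤ u ∧
    (π i < π j.1 ∨ (j.1 = i ∧ j.2 < k)) with hB
  have hpri : ∀ j : ι × ℕ, B j → π i ≤ π j.1 := by
    intro j hBj
    rcases hBj.2.2 with h | ⟨h, -⟩
    · exact le_of_lt h
    · exact le_of_eq (by rw [h])
  -- closure under σ
  have hclσ : ∀ t < u, ∀ j, B j → Pending O T C σ j t → ∃ j', σ t = some j' ∧ B j' := by
    intro t ht j hBj hpend
    obtain ⟨j', hs, hp', hle1, hcase⟩ := sched_pick hπ hT hσ hpend (hpri j hBj)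
    refine ⟨j', hs, ⟨fun h => hmin t ht (h ▸ hs), le_trans hp'.1 (le_of_lt ht), ?_⟩⟩
    rcases hcase with h | ⟨h1, h2⟩
    · exact Or.inl h
    · rcases hBj.2.2 with h3 | ⟨h3, h4⟩
      · rw [h1] at hle1; omega
      · exact Or.inr ⟨h1, by have := h2 h3; omega⟩
  -- closure under σ'
  have hclσ' : ∀ t < u, ∀ j, B j → Pending O T C' σ' j t → ∃ j', σ' t = some j' ∧ B j' := by
    intro t ht j hBj hpend
    obtain ⟨j', hs, hp', hle1, hcase⟩ := sched_pick hπ hT hσ' hpend (hpri j hBj)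
    refine ⟨j', hs, ⟨fun h => hcon t (le_of_lt ht) (h ▸ hs), le_trans hp'.1 (le_of_lt ht), ?_⟩⟩
    rcases hcase with h | ⟨h1, h2⟩
    · exact Or.inl h
    · rcases hBj.2.2 with h3 | ⟨h3, h4⟩
      · rw [h1] at hle1; omega
      · exact Or.inr ⟨h1, by have := h2 h3; omega⟩
  -- all B-jobs are complete at u under σ
  have hrem0 : rem O T C σ B u = 0 := by
    refine rem_eq_zero_of_served hT (fun j hBj hrelu => ?_)
    by_contra hlt
    push_neg at hlt
    have hpend : Pending O T C σ j u := ⟨hrelu, hlt⟩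
    obtain ⟨j2, hs, hp2, hmax, hrel⟩ := (hσ u).2 ⟨j, hpend⟩
    rw [hu] at hs
    injection hs with hs
    subst hs
    rcases hBj.2.2 with h | ⟨h1, h2⟩
    · have := hmax j hpend; simp at this; omega
    · have hpj : Pending O T C σ ((i,k).1, j.2) u := by
        simp only
        rw [← h1, Prod.mk.eta]; exact hpend
      have h3 := hrel j.2 hpj
      simp only at h3
      have := (release_le_release_iff (hT i)).1 h3
      omega
  have hmono := rem_mono hT hle hσ hσ' B u hclσ hclσ' u le_rfl
  have hrem'0 : rem O T C' σ' B u = 0 := by omega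
  -- (i,k) is pending at u under σ', so σ' serves some B-job, contradiction
  have hrel_ik : release O T i k ≤ u := (served_pending hσ hu).1
  have hserv0 : service σ' (release O T i k) (i,k) u = 0 := by
    classical
    unfold service
    rw [Finset.card_eq_zero, Finset.filter_eq_empty_iff]
    intro v hv
    exact hcon v (le_of_lt (Finset.mem_Ico.1 hv).2)
  have hpend' : Pending O T C' σ' (i,k) u := ⟨hrel_ik, by
    show service σ' (release O T i k) (i,k) u < C' i k
    rw [hserv0]; exact hC' i k⟩
  obtain ⟨j', hs', hp', hle1, hcase⟩ := sched_pick hπ hT hσ' hpend' le_rfl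
  have hne : j' ≠ (i,k) := fun h => hcon u le_rfl (h ▸ hs')
  have hBj' : B j' := by
    refine ⟨hne, hp'.1, ?_⟩
    rcases hcase with h | ⟨h1, h2⟩
    · exact Or.inl h
    · have h3 : j'.2 ≤ k := h2 rfl
      have h4 : j'.2 ≠ k := by
        intro hh
        exact hne (Prod.ext h1 hh)
      exact Or.inr ⟨h1, by omega⟩
  have := rem_pos_of_pending hT hBj' hp'
  omega

lemma finish_core {π O T : ι → ℕ} (hπ : Function.Injective π) (hT : ∀ i, 1 ≤ T i)
    {C C' : ι → ℕ → ℕ} (hC : ∀ i k, 1 ≤ C i k) (hle : ∀ i k, C' i k ≤ C i k)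
    {σ σ' : ℕ → Option (ι × ℕ)} (hσ : IsFPSchedule π O T C σ)
    (hσ' : IsFPSchedule π O T C' σ') (i : ι) (k : ℕ) {f : ℕ}
    (hf : service σ (release O T i k) (i,k) f = C i k)
    (hmin : ∀ v < f, service σ (release O T i k) (i,k) v ≠ C i k) :
    service σ' (release O T i k) (i,k) f = C' i k := by
  have hf0 : f ≠ 0 := by
    intro h
    subst h
    rw [service_zero σ _ _ (Nat.zero_le _)] at hf
    have := hC i k
    omega
  obtain ⟨g, rfl⟩ : ∃ g, f = g + 1 := ⟨f - 1, by omega⟩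
  have hservg : service σ (release O T i k) (i,k) g < C i k :=
    lt_of_le_of_ne (by rw [← hf]; exact service_mono _ _ _ (Nat.le_succ g))
      (hmin g (by omega))
  have hstep := service_succ σ (release O T i k) (i,k) g
  rw [hf] at hstep
  have hind : release O T i k ≤ g ∧ σ g = some (i,k) := by
    by_contra h
    rw [if_neg h] at hstep
    omega
  set B : ι × ℕ → Prop := fun j => release O T j.1 j.2 < g + 1 ∧
    (π i < π j.1 ∨ (j.1 = i ∧ j.2 ≤ k)) with hB
  have hpri : ∀ j : ι × ℕ, B j → π i ≤ π j.1 := by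
    intro j hBj
    rcases hBj.2 with h | ⟨h, -⟩
    · exact le_of_lt h
    · exact le_of_eq (by rw [h])
  have hclσ : ∀ t < g + 1, ∀ j, B j → Pending O T C σ j t →
      ∃ j', σ t = some j' ∧ B j' := by
    intro t ht j hBj hpend
    obtain ⟨j', hs, hp', hle1, hcase⟩ := sched_pick hπ hT hσ hpend (hpri j hBj)
    refine ⟨j', hs, ⟨lt_of_le_of_lt hp'.1 ht, ?_⟩⟩
    rcases hcase with h | ⟨h1, h2⟩
    · exact Or.inl h
    · rcases hBj.2 with h3 | ⟨h3, h4⟩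
      · rw [h1] at hle1; omega
      · exact Or.inr ⟨h1, by have := h2 h3; omega⟩
  have hclσ' : ∀ t < g + 1, ∀ j, B j → Pending O T C' σ' j t →
      ∃ j', σ' t = some j' ∧ B j' := by
    intro t ht j hBj hpend
    obtain ⟨j', hs, hp', hle1, hcase⟩ := sched_pick hπ hT hσ' hpend (hpri j hBj)
    refine ⟨j', hs, ⟨lt_of_le_of_lt hp'.1 ht, ?_⟩⟩
    rcases hcase with h | ⟨h1, h2⟩
    · exact Or.inl h
    · rcases hBj.2 with h3 | ⟨h3, h4⟩
      · rw [h1] at hle1; omega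
      · exact Or.inr ⟨h1, by have := h2 h3; omega⟩
  -- all B-jobs are complete at g+1 under σ
  have hrem0 : rem O T C σ B (g+1) = 0 := by
    refine rem_eq_zero_of_served hT (fun j hBj hrelu => ?_)
    by_cases hjik : j = (i,k)
    · subst hjik
      exact le_of_eq hf.symm
    · have hnp : ¬ Pending O T C σ j g := by
        intro hpend
        obtain ⟨j2, hs, hp2, hmax, hrel⟩ := (hσ g).2 ⟨j, hpend⟩
        rw [hind.2] at hs
        injection hs with hs
        subst hs
        rcases hBj.2 with h | ⟨h1, h2⟩
        · have := hmax j hpend; simp at this; omega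
        · have hpj : Pending O T C σ ((i,k).1, j.2) g := by
            simp only
            rw [← h1, Prod.mk.eta]; exact hpend
          have h3 := hrel j.2 hpj
          simp only at h3
          have h5 := (release_le_release_iff (hT i)).1 h3
          have h6 : j.2 = k := by omega
          exact hjik (Prod.ext h1 h6)
      unfold Pending at hnp
      push_neg at hnp
      have h7 := hnp (by have := hBj.1; omega)
      exact le_trans h7 (service_mono _ _ _ (Nat.le_succ g))
  have hmono := rem_mono hT hle hσ hσ' B (g+1) hclσ hclσ' (g+1) le_rfl
  have hrem'0 : rem O T C' σ' B (g+1) = 0 := by omega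
  have hB_ik : B (i,k) := ⟨show release O T i k < g + 1 by have := hind.1; omega, Or.inr ⟨rfl, le_rfl⟩⟩
  have hmem : (i,k) ∈ jobsB O T B (g+1) (g+1) :=
    (mem_jobsB hT le_rfl).2 ⟨le_trans hind.1 (Nat.le_succ g), hB_ik⟩
  have hterm : C' i k - service σ' (release O T i k) (i,k) (g+1) = 0 := by
    unfold rem at hrem'0
    exact Finset.sum_eq_zero_iff.1 hrem'0 _ hmem
  have hle' := service_le_req hσ' (i,k) (g+1)
  simp only at hle'
  omega

end Core

/-- **Monotonicity of start and finish times in the execution requirements.**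
If `C' ≤ C` pointwise (with identical releases, periods, phases and priorities), then
under the preemptive fixed-priority schedules for `C'` and `C`, every job starts and
finishes no later under `C'` than under `C`.  In particular, the all-WCET schedule gives
upper bounds on the start and finish times of all jobs over all execution-time assignments
bounded above by the worst-case execution times. -/
theorem start_finish_monotone_in_requirements {ι : Type} [Fintype ι]
    (π O T : ι → ℕ) (hπ : Function.Injective π) (hT : ∀ i, 1 ≤ T i)
    (C C' : ι → ℕ → ℕ) (hC : ∀ i k, 1 ≤ C i k) (hC' : ∀ i k, 1 ≤ C' i k)
    (hle : ∀ i k, C' i k ≤ C i k)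
    (σ σ' : ℕ → Option (ι × ℕ))
    (hσ : IsFPSchedule π O T C σ) (hσ' : IsFPSchedule π O T C' σ') :
    ∀ (i : ι) (k : ℕ),
      startTime σ' (i, k) ≤ startTime σ (i, k) ∧
      finishTime O T C' σ' (i, k) ≤ finishTime O T C σ (i, k) := by
  classical
  intro i k
  constructor
  · refine le_sInf ?_
    rintro b ⟨u, rfl, hu⟩
    have hex : ∃ v, σ v = some (i,k) := ⟨u, hu⟩
    have hv := Nat.find_spec hex
    have hvu : Nat.find hex ≤ u := Nat.find_le hu
    have hmin : ∀ w < Nat.find hex, σ w ≠ some (i,k) := fun w hw => Nat.find_min hex hw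
    obtain ⟨u', hu'le, hu'⟩ := start_core hπ hT hC' hle hσ hσ' i k hv hmin
    refine le_trans (sInf_le ⟨u', rfl, hu'⟩) ?_
    exact_mod_cast hu'le.trans hvu
  · refine le_sInf ?_
    rintro b ⟨u, rfl, hu⟩
    have hex : ∃ v, service σ (release O T i k) (i,k) v = C i k := ⟨u, hu⟩
    have hv := Nat.find_spec hex
    have hvu : Nat.find hex ≤ u := Nat.find_le hu
    have hmin : ∀ w < Nat.find hex, service σ (release O T i k) (i,k) w ≠ C i k :=
      fun w hw => Nat.find_min hex hw
    have hfin := finish_core hπ hT hC hle hσ hσ' i k hv hmin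
    refine le_trans (sInf_le ⟨Nat.find hex, rfl, hfin⟩) ?_
    exact_mod_cast hvu
end

section
/- In the discrete-time uniprocessor preemptive fixed-priority scheduling model, let w and r be two tasks with π(w) > π(r), let J_w = J_w^{k_w} and J_r = J_r^{k_r} be jobs with release times satisfying r(w,k_w) ≤ r(r,k_r), and suppose J_w finishes, i.e., f_C(w,k_w) < ⊤. Then J_r is never served before J_w finishes: s_C(r,k_r) ≥ f_C(w,k_w). In other words, assigning the reading job a release time no earlier than its writing job's release time and a strictly lower priority enforces the Read-After-Write execution dependency (the reader starts only after the writer finishes) without departing from time-triggered fixed-priority scheduling. -/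
/-!
Suppose `J_r` were served at some instant `u` before `J_w` finishes. A served job is pending,
so `r(w,k_w) ≤ r(r,k_r) ≤ u`; and `J_w` has not yet received its full requirement at `u`.
Hence `J_w` is pending at `u` as well, and the fixed-priority rule would have served a job
of priority at least `π w > π r` instead of `J_r`.
-/

open scoped BigOperators

section Service

variable {ι : Type} (σ : ℕ → Option (ι × ℕ)) (rel : ℕ) (j : ι × ℕ)

lemma service_succ_le (t : ℕ) : service σ rel j (t + 1) ≤ service σ rel j t + 1 := by
  classical
  unfold service
  calc _ ≤ (insert t ((Finset.Ico rel t).filter (fun u => σ u = some j))).card := by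
        refine Finset.card_le_card fun x hx => ?_
        simp only [Finset.mem_filter, Finset.mem_Ico, Finset.mem_insert] at hx ⊢
        obtain ⟨⟨hrel, hxt⟩, hserved⟩ := hx
        rcases Nat.lt_succ_iff_lt_or_eq.mp hxt with hlt | rfl
        · exact Or.inr ⟨⟨hrel, hlt⟩, hserved⟩
        · exact Or.inl rfl
    _ ≤ _ := Finset.card_insert_le _ _

/-- Service grows in unit steps from `0`, so it passes through every value it exceeds. -/
lemma exists_service_eq_of_le {c u : ℕ} (hu : c ≤ service σ rel j u) :
    ∃ t ≤ u, service σ rel j t = c := by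
  induction u with
  | zero =>
    have hzero : service σ rel j 0 = 0 := by simp [service]
    exact ⟨0, le_rfl, by omega⟩
  | succ n ih =>
    by_cases hn : c ≤ service σ rel j n
    · obtain ⟨t, htn, ht⟩ := ih hn
      exact ⟨t, htn.trans n.le_succ, ht⟩
    · exact ⟨n + 1, le_rfl, by have := service_succ_le σ rel j n; omega⟩

end Service

lemma service_lt_of_lt_finishTime {ι : Type} {O T : ι → ℕ} {C : ι → ℕ → ℕ}
    {σ : ℕ → Option (ι × ℕ)} {j : ι × ℕ} {u : ℕ} (hu : (u : ℕ∞) < finishTime O T C σ j) :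
    service σ (release O T j.1 j.2) j u < C j.1 j.2 := by
  by_contra! hge
  obtain ⟨t, htu, ht⟩ := exists_service_eq_of_le σ _ j hge
  have hfin : finishTime O T C σ j ≤ t := sInf_le ⟨t, rfl, ht⟩
  exact hu.not_ge (hfin.trans (by exact_mod_cast htu))

namespace IsFPSchedule

variable {ι : Type} {π O T : ι → ℕ} {C : ι → ℕ → ℕ} {σ : ℕ → Option (ι × ℕ)}
  {j : ι × ℕ} {t : ℕ}

lemma pending_of_eq_some (hσ : IsFPSchedule π O T C σ) (ht : σ t = some j) :
    Pending O T C σ j t := by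
  by_cases hp : ∃ j', Pending O T C σ j' t
  · obtain ⟨j', hj', hpend, -⟩ := (hσ t).2 hp
    obtain rfl : j = j' := Option.some.inj (ht.symm.trans hj')
    exact hpend
  · simp [(hσ t).1 hp] at ht

lemma priority_le_of_eq_some (hσ : IsFPSchedule π O T C σ) (ht : σ t = some j)
    {j' : ι × ℕ} (hj' : Pending O T C σ j' t) : π j'.1 ≤ π j.1 := by
  obtain ⟨j'', hj'', -, hmax, -⟩ := (hσ t).2 ⟨j', hj'⟩
  rw [ht, Option.some.injEq] at hj''
  exact hj'' ▸ hmax j' hj'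

end IsFPSchedule

theorem read_after_write_by_release_and_priority_general {ι : Type}
    (π O T : ι → ℕ)
    (C : ι → ℕ → ℕ)
    (σ : ℕ → Option (ι × ℕ)) (hσ : IsFPSchedule π O T C σ)
    (w r : ι) (hpri : π r < π w) (kw kr : ℕ)
    (hrel : release O T w kw ≤ release O T r kr) :
    finishTime O T C σ (w, kw) ≤ startTime σ (r, kr) := by
  refine le_sInf ?_
  rintro _ ⟨u, rfl, hu⟩
  by_contra! hlt
  have hr_pending := hσ.pending_of_eq_some hu
  have hw_pending : Pending O T C σ (w, kw) u :=
    ⟨hrel.trans hr_pending.1, service_lt_of_lt_finishTime hlt⟩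
  exact (hσ.priority_le_of_eq_some hu hw_pending).not_gt hpri

/-- **Read-After-Write via release times and priorities.**  Let `w` and `r` be tasks with
`π w > π r`, and let `J_w = J_w^{k_w}` and `J_r = J_r^{k_r}` be jobs with
`r(w,k_w) ≤ r(r,k_r)`, where `J_w` finishes.  Then under the preemptive fixed-priority
schedule, `J_r` is never served before `J_w` finishes: `s(r,k_r) ≥ f(w,k_w)`.  Thus
assigning the reading job a release no earlier than its writing job's release and a
strictly lower priority enforces the Read-After-Write execution dependency within
time-triggered fixed-priority scheduling. -/
theorem read_after_write_by_release_and_priority {ι : Type} [Fintype ι]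
    (π O T : ι → ℕ) (hπ : Function.Injective π) (hT : ∀ i, 1 ≤ T i)
    (C : ι → ℕ → ℕ) (hC : ∀ i k, 1 ≤ C i k)
    (σ : ℕ → Option (ι × ℕ)) (hσ : IsFPSchedule π O T C σ)
    (w r : ι) (hpri : π r < π w) (kw kr : ℕ)
    (hrel : release O T w kw ≤ release O T r kr)
    (hfin : finishTime O T C σ (w, kw) < ⊤) :
    finishTime O T C σ (w, kw) ≤ startTime σ (r, kr) :=
  read_after_write_by_release_and_priority_general π O T C σ hσ w r hpri kw kr hrel
end

section
/- (Minimum reaction time attained at all-BCET execution) Let E = (E(1), …, E(n)) be a cause–effect chain with a fixed communication relation R (Deterministic Data Flow), and let 𝕊 be a family of schedules, each assigning finish times to jobs, containing a distinguished schedule S_B (the all-BCET schedule) such that f_{S_B}(J) ≤ f_S(J) for every schedule S ∈ 𝕊 and every job J. Define mRT(E, S) = inf { ℓ(iac_{E,S}^m) : m ∈ ℕ, ic_{E,R}^m defined } and mRT(E) = inf { mRT(E, S) : S ∈ 𝕊 }. Then mRT(E) = mRT(E, S_B); that is, the minimum reaction time over all schedules in 𝕊 is attained by (and equals) that of the all-BCET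 schedule. -/
/-- A job is a pair (task, id): `J_τ^k` is `(τ, k)`. -/
abbrev Job (Task : Type) := Task × ℕ

open Classical in
/-- Candidate ids in task `τ'` for the immediate-forward successor of job `J` under the
communication relation `R`.  Case 1: if `R J` contains some job of `τ'`, the candidates are
the ids of jobs of `τ'` in `R J`.  Case 2: otherwise, the candidates are the ids of jobs of
`τ'` appearing in `R J'` for some later job `J'` of the same task as `J` (such a `J'`
automatically has `R J'` containing a job of `τ'`). -/
noncomputable def succCand {Task : Type} (R : Job Task → Set (Job Task))
    (J : Job Task) (τ' : Task) : Set ℕ :=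
  if ∃ J' ∈ R J, J'.1 = τ' then
    {k | (τ', k) ∈ R J}
  else
    {k | ∃ l : ℕ, J.2 < l ∧ (τ', k) ∈ R (J.1, l)}

open Classical in
/-- The immediate-forward successor of job `J` in task `τ'` under `R`, when defined:
the job of `τ'` with minimal id among the candidates. -/
noncomputable def ifSucc {Task : Type} (R : Job Task → Set (Job Task))
    (J : Job Task) (τ' : Task) : Option (Job Task) :=
  if (succCand R J τ').Nonempty then some (τ', sInf (succCand R J τ')) else none

/-- The immediate forward job chain of a job `J` through a remaining list of tasks. -/
noncomputable def icFrom {Task : Type} (R : Job Task → Set (Job Task)) :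
    List Task → Job Task → Option (List (Job Task))
  | [], J => some [J]
  | τ' :: rest, J => (ifSucc R J τ').bind fun J' => (icFrom R rest J').map (fun l => J :: l)

/-- The immediate forward job chain `ic_{E,R}^m` of a CE chain `E` for sampling index `m`:
it starts with job `J_{E(1)}^{m+1}` and follows immediate-forward successors. -/
noncomputable def ic {Task : Type} (R : Job Task → Set (Job Task))
    (E : List Task) (m : ℕ) : Option (List (Job Task)) :=
  match E with
  | [] => none
  | τ1 :: rest => icFrom R rest ((τ1, m + 1) : Job Task)

/-- Length of the immediate forward augmented job chain `iac_{E,S}^m = (z, ic_{E,R}^m, z')`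
for a schedule with finish-time function `f`: `z` is the (schedule-independent) release
time of `J_{E(1)}^m` and `z' = f Jn` is the finish (write-event) time of the last job `Jn`
of the chain; the length is `z' − z`. -/
def iacLen {Task : Type} (f : Job Task → ℕ) (z : ℕ) (Jn : Job Task) : ℕ := f Jn - z

/-- The minimum reaction time of CE chain `E` under the schedule with finish-time
function `f` (in `ℕ∞`): the infimum of the lengths `ℓ(iac_{E,S}^m)` over all `m` for
which `ic_{E,R}^m` is defined.  `rel1 m` is the (schedule-independent) release time of
job `J_{E(1)}^m`. -/
noncomputable def mRT {Task : Type} (R : Job Task → Set (Job Task)) (E : List Task)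
    (rel1 : ℕ → ℕ) (f : Job Task → ℕ) : ℕ∞ :=
  sInf {x : ℕ∞ | ∃ (m : ℕ) (ch : List (Job Task)) (_ : ic R E m = some ch)
    (hne : ch ≠ []), x = (iacLen f (rel1 m) (ch.getLast hne) : ℕ∞)}

/-- **Minimum reaction time attained at all-BCET execution.**  Let `E` be a CE chain with
a fixed communication relation `R` (Deterministic Data Flow), and let `𝕊` be a family of
schedules (finish-time functions) containing a distinguished all-BCET schedule `fB` with
`fB J ≤ f J` for every `f ∈ 𝕊` and every job `J`.  Then
`mRT(E) = inf {mRT(E,S) : S ∈ 𝕊} = mRT(E, S_B)`: the minimum reaction time over all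
schedules is attained by (and equals) that of the all-BCET schedule. -/
theorem mRT_attained_at_all_bcet {Task : Type} (E : List Task)
    (R : Job Task → Set (Job Task)) (rel1 : ℕ → ℕ)
    (𝕊 : Set (Job Task → ℕ)) (fB : Job Task → ℕ) (hB : fB ∈ 𝕊)
    (hlb : ∀ f ∈ 𝕊, ∀ J, fB J ≤ f J) :
    sInf ((fun f => mRT R E rel1 f) '' 𝕊) = mRT R E rel1 fB := by
  apply le_antisymm
  · exact sInf_le ⟨fB, hB, rfl⟩
  · apply le_sInf
    rintro x ⟨f, hf, rfl⟩
    apply le_sInf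
    rintro y ⟨m, ch, hic, hne, rfl⟩
    calc mRT R E rel1 fB ≤ (iacLen fB (rel1 m) (ch.getLast hne) : ℕ∞) :=
          sInf_le ⟨m, ch, hic, hne, rfl⟩
      _ ≤ _ := by exact_mod_cast Nat.sub_le_sub_right (hlb f hf _) _
end
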